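/- Let P = P⁽¹⁾⊗...⊗P⁽ⁿ⁾ and, for each parameter ν in a finite set V with a probability distribution, Q_ν = Q_ν⁽¹⁾⊗...⊗Q_ν⁽ⁿ⁾ be product probability distributions on a finite product space, mutually absolutely continuous with P. Then the chi-squared divergence of the mixture satisfies d_{χ²}(E_ν[Q_ν], P) = E_{ν₁,ν₂}[∏_{i=1}^n (1 + H_i(ν₁,ν₂))] − 1, where ν₁, ν₂ are i.i.d. copies of ν, H_i(ν₁,ν₂) = E_{y∼P⁽ⁱ⁾}[δ_{ν₁}⁽ⁱ⁾(y) δ_{ν₂}⁽ⁱ⁾(y)], and δ_ν⁽ⁱ⁾(y) = (q_ν⁽ⁱ⁾(y) − p⁽ⁱ⁾(y))/p⁽ⁱ⁾(y). -/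

import Mathlib

/-!
Both sides are sums over pairs `(ν₁, ν₂)` weighted by `π ν₁ * π ν₂`. Expanding the square of the
mixture gives `∑_y Q_{ν₁}(y) Q_{ν₂}(y) / P(y)` for each pair; since all three distributions are
products, this sum factorises as `∏ᵢ ∑_y q_{ν₁}⁽ⁱ⁾ q_{ν₂}⁽ⁱ⁾ / p⁽ⁱ⁾`, and each factor equals
`1 + Hᵢ(ν₁, ν₂)` because `p⁽ⁱ⁾`, `q_{ν₁}⁽ⁱ⁾` and `q_{ν₂}⁽ⁱ⁾` have total mass one.
-/

open Finset

theorem one_add_sum_mul_div_mul_div_eq {α : Type*} [Fintype α] (p a b : α → ℝ)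
    (hp : ∀ y, p y ≠ 0) (hp1 : ∑ y, p y = 1) (ha1 : ∑ y, a y = 1) (hb1 : ∑ y, b y = 1) :
    1 + ∑ y, p y * ((a y - p y) / p y) * ((b y - p y) / p y) = ∑ y, a y * b y / p y := by
  have expand : ∀ y, p y * ((a y - p y) / p y) * ((b y - p y) / p y)
      = a y * b y / p y - a y - b y + p y := by
    intro y
    field_simp [hp y]
    ring
  simp only [expand, sum_add_distrib, sum_sub_distrib, hp1, ha1, hb1]
  ring

theorem prod_sum_mul_div_eq_sum_prod {ι : Type*} [Fintype ι] [DecidableEq ι] {Y : ι → Type*}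
    [∀ i, Fintype (Y i)] (p a b : ∀ i, Y i → ℝ) :
    ∏ i, ∑ y, a i y * b i y / p i y
      = ∑ y : ∀ i, Y i, (∏ i, a i (y i)) * (∏ i, b i (y i)) / ∏ i, p i (y i) := by
  rw [Fintype.prod_sum]
  simp only [prod_div_distrib, prod_mul_distrib]

theorem sq_sum_mul_div_eq_sum_sum {V : Type*} [Fintype V] (w f : V → ℝ) (c : ℝ) :
    (∑ ν, w ν * f ν) ^ 2 / c = ∑ ν₁, ∑ ν₂, w ν₁ * w ν₂ * (f ν₁ * f ν₂ / c) := by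
  simp only [sq, sum_mul_sum, sum_div]
  exact sum_congr rfl fun _ _ => sum_congr rfl fun _ _ => by ring

theorem chi_squared_decoupled_fluctuation
    {n : ℕ} (Y : Fin n → Type*) [∀ i, Fintype (Y i)]
    {V : Type*} [Fintype V]
    (p : ∀ i, Y i → ℝ) (hp : ∀ i y, 0 < p i y) (hp1 : ∀ i, ∑ y, p i y = 1)
    (q : V → ∀ i, Y i → ℝ)
    (hq1 : ∀ ν i, ∑ y, q ν i y = 1)
    (π : V → ℝ) :
    (∑ y : ∀ i, Y i,
        (∑ ν, π ν * ∏ i, q ν i (y i)) ^ 2 / ∏ i, p i (y i)) - 1 =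
      (∑ ν₁, ∑ ν₂, π ν₁ * π ν₂ *
        ∏ i, (1 + ∑ y : Y i, p i y *
          ((q ν₁ i y - p i y) / p i y) * ((q ν₂ i y - p i y) / p i y))) - 1 := by
  congr 1
  simp only [fun ν₁ ν₂ i => one_add_sum_mul_div_mul_div_eq (p i) (q ν₁ i) (q ν₂ i)
      (fun y => (hp i y).ne') (hp1 i) (hq1 ν₁ i) (hq1 ν₂ i),
    prod_sum_mul_div_eq_sum_prod, sq_sum_mul_div_eq_sum_sum, mul_sum]
  rw [sum_comm]
  exact sum_congr rfl fun _ _ => sum_comm
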